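/- arXiv:1212.3633 — 4 statements merged into one kernel-verified Lean document; each statement's English description precedes it below -/
import Mathlib

section
/- If p chords are added to the cycle C_n (n ≥ 3), then the total number of cycles in the resulting graph is at least binomial(p+2, 2). -/
/-!
Sort the cycles of `G = Cₙ + S` by the set `E ∩ S` of chords they use. The Hamiltonian cycle
uses none. A chord `{a, b}` closes each of the two arcs of `Cₙ` between `a` and `b`, giving two
cycles that use it alone. Two chords, whichever of the three mutual positions (nested,
crossing, disjoint) they are in, are linked by two disjoint arcs of `Cₙ` into a cycle using
exactly those two chords. So each set `T ⊆ S` of chords is used by at least `choose 2 |T|` cycles, and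
`∑_{T ⊆ S} choose 2 |T| = choose (|S| + 2) 2` by Vandermonde's identity.
-/

open SimpleGraph

/-- `e` is a chord of the cycle graph `Cₙ`: an edge between two distinct,
non-adjacent vertices of the cycle. -/
def IsChord (n : ℕ) (e : Sym2 (Fin n)) : Prop :=
  ¬ e.IsDiag ∧ e ∉ (cycleGraph n).edgeSet

/-- The set of edge sets of cycles of a graph `G`; this identifies a cycle
with its edge set, so that each cycle is counted exactly once. -/
def cycleEdgeSets {V : Type*} [DecidableEq V] (G : SimpleGraph V) : Set (Finset (Sym2 V)) :=
  {E | ∃ (v : V) (w : G.Walk v v), w.IsCycle ∧ w.edges.toFinset = E}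

open Finset Walk

lemma sum_powerset_choose_two_card {α : Type*} (S : Finset α) :
    ∑ T ∈ S.powerset, (2).choose #T = (#S + 2).choose 2 := by
  rw [sum_powerset_apply_card, ← Nat.choose_symm_add, Nat.add_choose_eq,
    Nat.sum_antidiagonal_eq_sum_range_succ_mk, ← sum_range_reflect]
  refine sum_congr rfl fun j hj => ?_
  rw [smul_eq_mul, Nat.add_sub_cancel, Nat.choose_symm (Nat.lt_succ_iff.mp (mem_range.mp hj))]

namespace SimpleGraph.Walk

variable {V : Type*} {G : SimpleGraph V} (f : ℕ → V) (hf : ∀ i, G.Adj (f i) (f (i + 1)))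

def ofSeq {i j : ℕ} (h : i ≤ j) : G.Walk (f i) (f j) :=
  Nat.leRec nil (fun k _ w => w.concat (hf k)) h

variable {i j : ℕ}

@[simp]
lemma ofSeq_refl : ofSeq f hf (le_refl i) = nil := Nat.leRec_self _ _

lemma ofSeq_succ (h : i ≤ j) (h' : i ≤ j + 1) :
    ofSeq f hf h' = (ofSeq f hf h).concat (hf j) := Nat.leRec_succ _ _ h

lemma mem_support_ofSeq (h : i ≤ j) {x : V} :
    x ∈ (ofSeq f hf h).support ↔ ∃ k, i ≤ k ∧ k ≤ j ∧ f k = x := by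
  induction j, h using Nat.le_induction with
  | base =>
    rw [ofSeq_refl, support_nil, List.mem_singleton]
    constructor
    · rintro rfl
      exact ⟨i, le_rfl, le_rfl, rfl⟩
    · rintro ⟨k, hik, hki, rfl⟩
      rw [le_antisymm hki hik]
  | succ j hij ih =>
    rw [ofSeq_succ f hf hij, support_concat, List.mem_append, ih, List.mem_singleton]
    constructor
    · rintro (⟨k, hik, hkj, rfl⟩ | rfl)
      · exact ⟨k, hik, hkj.trans j.le_succ, rfl⟩
      · exact ⟨j + 1, by omega, le_rfl, rfl⟩
    · rintro ⟨k, hik, hkj, rfl⟩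
      rcases Nat.lt_or_eq_of_le hkj with hkj | rfl
      · exact Or.inl ⟨k, hik, Nat.lt_succ_iff.mp hkj, rfl⟩
      · exact Or.inr rfl

lemma isPath_ofSeq (h : i ≤ j) (hinj : Set.InjOn f (Set.Icc i j)) : (ofSeq f hf h).IsPath := by
  induction j, h using Nat.le_induction with
  | base => simp
  | succ j hij ih =>
    rw [ofSeq_succ f hf hij]
    refine (ih (hinj.mono (Set.Icc_subset_Icc_right j.le_succ))).concat ?_ _
    rw [mem_support_ofSeq]
    rintro ⟨k, hik, hkj, hk⟩
    have := hinj ⟨hik, hkj.trans j.le_succ⟩ ⟨by omega, le_rfl⟩ hk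
    omega

lemma mem_edges_ofSeq (h : i ≤ j) {k : ℕ} (hik : i ≤ k) (hkj : k < j) :
    s(f k, f (k + 1)) ∈ (ofSeq f hf h).edges := by
  induction j, h using Nat.le_induction with
  | base => omega
  | succ j hij ih =>
    rw [ofSeq_succ f hf hij, edges_concat, List.concat_eq_append, List.mem_append,
      List.mem_singleton]
    rcases Nat.lt_or_eq_of_le (Nat.lt_succ_iff.mp hkj) with hkj | rfl
    · exact Or.inl (ih hkj)
    · exact Or.inr rfl

end SimpleGraph.Walk

section AddedEdges

variable {V : Type*} [DecidableEq V] {H : SimpleGraph V} {S : Finset (Sym2 V)}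

lemma toFinset_edges_inter_eq_empty (hS : ∀ e ∈ S, e ∉ H.edgeSet) {u v : V} (p : H.Walk u v) :
    p.edges.toFinset ∩ S = ∅ :=
  Finset.disjoint_iff_inter_eq_empty.mp <| Finset.disjoint_right.mpr fun e he hp =>
    hS e he (p.edges_subset_edgeSet (List.mem_toFinset.mp hp))

lemma insert_toFinset_edges_inter_eq (hS : ∀ e ∈ S, e ∉ H.edgeSet) {e : Sym2 V} (he : e ∈ S)
    {u v : V} (p : H.Walk u v) : insert e p.edges.toFinset ∩ S = {e} := by
  rw [insert_inter_of_mem he, toFinset_edges_inter_eq_empty hS]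
  rfl

lemma exists_mem_cycleEdgeSets_inter_eq_empty (hS : ∀ e ∈ S, e ∉ H.edgeSet) {u : V}
    {c : H.Walk u u} (hc : c.IsCycle) :
    ∃ E ∈ cycleEdgeSets (H ⊔ fromEdgeSet S), E ∩ S = ∅ :=
  ⟨_, ⟨u, c.mapLe le_sup_left, (isCycle_mapLe _).mpr hc, rfl⟩,
    by rw [edges_mapLe_eq_edges, toFinset_edges_inter_eq_empty hS]⟩

lemma insert_toFinset_edges_mem_cycleEdgeSets {u v : V} {p : H.Walk u v} (hp : p.IsPath)
    (huv : u ≠ v) (he : s(v, u) ∈ S) (hH : s(v, u) ∉ H.edgeSet) :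
    insert s(v, u) p.edges.toFinset ∈ cycleEdgeSets (H ⊔ fromEdgeSet S) := by
  have hadj : (H ⊔ fromEdgeSet S).Adj v u := Or.inr ⟨he, huv.symm⟩
  refine ⟨v, cons hadj (p.mapLe le_sup_left), ?_, by simp⟩
  rw [cons_isCycle_iff, isPath_mapLe, edges_mapLe_eq_edges]
  exact ⟨hp, fun h => hH (p.edges_subset_edgeSet h)⟩

lemma exists_mem_cycleEdgeSets_inter_eq_pair (hS : ∀ e ∈ S, e ∉ H.edgeSet) {a b c d : V}
    {p : H.Walk a b} {q : H.Walk c d} (hp : p.IsPath) (hq : q.IsPath)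
    (hpq : p.support.Disjoint q.support) (hbc : s(b, c) ∈ S) (hda : s(d, a) ∈ S)
    (hne : s(b, c) ≠ s(d, a)) :
    ∃ E ∈ cycleEdgeSets (H ⊔ fromEdgeSet S), E ∩ S = {s(d, a), s(b, c)} := by
  have hbc' : (H ⊔ fromEdgeSet S).Adj b c :=
    Or.inr ⟨hbc, fun h => hpq p.end_mem_support (h ▸ q.start_mem_support)⟩
  have hda' : (H ⊔ fromEdgeSet S).Adj d a :=
    Or.inr ⟨hda, fun h => hpq p.start_mem_support (h ▸ q.end_mem_support)⟩
  let w := (p.mapLe le_sup_left).append (cons hbc' (q.mapLe le_sup_left))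
  have hw : w.IsPath := by
    rw [isPath_def, support_append, support_cons, List.tail_cons, support_mapLe_eq_support,
      support_mapLe_eq_support, List.nodup_append]
    exact ⟨hp.support_nodup, hq.support_nodup, fun x hx y hy hxy => hpq hx (hxy ▸ hy)⟩
  have hda_notMem : s(d, a) ∉ w.edges := by
    rw [edges_append, edges_cons, edges_mapLe_eq_edges, edges_mapLe_eq_edges, List.mem_append,
      List.mem_cons]
    rintro (h | h | h)
    · exact hpq (p.fst_mem_support_of_mem_edges h) q.end_mem_support
    · exact hne h.symm
    · exact hpq p.start_mem_support (q.snd_mem_support_of_mem_edges h)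
  refine ⟨_, ⟨d, Walk.cons hda' w, (cons_isCycle_iff _ _).mpr ⟨hw, hda_notMem⟩, rfl⟩,
    ?_⟩
  simp [w, Finset.insert_inter_of_mem, Finset.union_inter_distrib_right,
    toFinset_edges_inter_eq_empty hS, hbc, hda]

end AddedEdges

section CycleArc

variable {n : ℕ}

lemma IsChord.val_add_two_le {x y : Fin n} (hxy : x < y) (h : IsChord n s(x, y)) :
    x.val + 2 ≤ y.val ∧ y.val + 2 ≤ x.val + n := by
  have hx := Fin.coe_sub_iff_lt.mpr hxy
  have hy := Fin.coe_sub_iff_le.mpr hxy.le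
  have := h.2
  rw [SimpleGraph.mem_edgeSet, cycleGraph_adj'] at this
  rw [Fin.lt_def] at hxy
  omega

variable [NeZero n]

lemma Fin.ofNat_succ (i : ℕ) : Fin.ofNat n (i + 1) = Fin.ofNat n i + 1 := by
  ext
  simp [Fin.val_add, Nat.add_mod]

lemma Fin.ofNat_add_self (i : ℕ) : Fin.ofNat n (i + n) = Fin.ofNat n i := by
  ext
  simp

lemma Fin.ofNat_injOn_Ico (m : ℕ) : Set.InjOn (Fin.ofNat n) (Set.Ico m (m + n)) := by
  intro x hx y hy hxy
  refine Nat.ModEq.eq_of_abs_lt (by simpa [Fin.ext_iff] using hxy : x % n = y % n) ?_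
  rw [abs_sub_lt_iff]
  simp only [Set.mem_Ico] at hx hy
  omega

lemma Fin.eq_or_eq_of_ofNat_mem {i j k : ℕ} (hi : i < n) (hj : j < n) (hk : k < n)
    (h : Fin.ofNat n k ∈ s(Fin.ofNat n i, Fin.ofNat n j)) : k = i ∨ k = j := by
  have hinj := Fin.ofNat_injOn_Ico (n := n) 0
  rcases Sym2.mem_iff.mp h with h | h
  · exact Or.inl (hinj (by grind) (by grind) h)
  · exact Or.inr (hinj (by grind) (by grind) h)

lemma cycleGraph_adj_ofNat_succ (hn : 2 ≤ n) (i : ℕ) :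
    (cycleGraph n).Adj (Fin.ofNat n i) (Fin.ofNat n (i + 1)) := by
  rw [cycleGraph_adj', Fin.ofNat_succ, add_sub_cancel_left, Fin.val_one', Nat.mod_eq_of_lt hn]
  exact Or.inr rfl

def cycleArc (hn : 2 ≤ n) {i j : ℕ} (h : i ≤ j) :
    (cycleGraph n).Walk (Fin.ofNat n i) (Fin.ofNat n j) :=
  ofSeq _ (cycleGraph_adj_ofNat_succ hn) h

variable (hn : 2 ≤ n) {i j : ℕ}

lemma isPath_cycleArc (h : i ≤ j) (hj : j < i + n) : (cycleArc hn h).IsPath :=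
  isPath_ofSeq _ _ h ((Fin.ofNat_injOn_Ico i).mono (Set.Icc_subset_Ico_right hj))

lemma ofNat_notMem_support_cycleArc (h : i ≤ j) {k : ℕ} (hki : k < i) (hjk : j < k + n) :
    Fin.ofNat n k ∉ (cycleArc hn h).support := by
  rw [cycleArc, mem_support_ofSeq]
  rintro ⟨l, hil, hlj, hl⟩
  have := Fin.ofNat_injOn_Ico k ⟨by omega, by omega⟩ ⟨le_rfl, by omega⟩ hl
  omega

lemma disjoint_support_cycleArc {m i' j' : ℕ} (h : i ≤ j) (h' : i' ≤ j') (hm : m ≤ i)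
    (hji' : j < i') (hj' : j' < m + n) :
    (cycleArc hn h).support.Disjoint (cycleArc hn h').support := by
  intro x hx hx'
  rw [cycleArc, mem_support_ofSeq] at hx hx'
  obtain ⟨k, hik, hkj, rfl⟩ := hx
  obtain ⟨k', hik', hkj', hk⟩ := hx'
  have := Fin.ofNat_injOn_Ico m (by grind) (by grind) hk
  omega

lemma IsChord.exists_eq_ofNat {e : Sym2 (Fin n)} (he : IsChord n e) :
    ∃ a b, a + 2 ≤ b ∧ b + 2 ≤ a + n ∧ b < n ∧ e = s(Fin.ofNat n a, Fin.ofNat n b) := by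
  induction e using Sym2.ind with | _ x y => ?_
  rcases lt_trichotomy x y with hxy | rfl | hxy
  · obtain ⟨h1, h2⟩ := he.val_add_two_le hxy
    exact ⟨x, y, h1, h2, y.isLt, by simp⟩
  · exact absurd (Sym2.mk_isDiag_iff.mpr rfl) he.1
  · obtain ⟨h1, h2⟩ := (Sym2.eq_swap ▸ he : IsChord n s(y, x)).val_add_two_le hxy
    exact ⟨y, x, h1, h2, x.isLt, by simp [Sym2.eq_swap]⟩

end CycleArc

section ChordCycles

variable {n : ℕ} {S : Finset (Sym2 (Fin n))}

lemma exists_cycle_chords_eq_empty (hn : 3 ≤ n) (hS : ∀ e ∈ S, IsChord n e) :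
    ∃ E ∈ cycleEdgeSets (cycleGraph n ⊔ fromEdgeSet ↑S), E ∩ S = ∅ := by
  obtain ⟨m, rfl⟩ : ∃ m, n = m + 3 := ⟨n - 3, by omega⟩
  exact exists_mem_cycleEdgeSets_inter_eq_empty (fun e he => (hS e he).2) cycleGraph.isCycle_cycle

variable [NeZero n] (hn : 2 ≤ n) (hS : ∀ e ∈ S, IsChord n e)
include hn hS

lemma exists_two_cycles_chords_eq_singleton {e : Sym2 (Fin n)} (he : e ∈ S) :
    ∃ E₁ ∈ cycleEdgeSets (cycleGraph n ⊔ fromEdgeSet ↑S),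
      ∃ E₂ ∈ cycleEdgeSets (cycleGraph n ⊔ fromEdgeSet ↑S),
        E₁ ≠ E₂ ∧ E₁ ∩ S = {e} ∧ E₂ ∩ S = {e} := by
  have hS' : ∀ e ∈ S, e ∉ (cycleGraph n).edgeSet := fun e he => (hS e he).2
  obtain ⟨a, b, hab, hba, hb, rfl⟩ := (hS _ he).exists_eq_ofNat
  have hne : Fin.ofNat n a ≠ Fin.ofNat n b :=
    (Fin.ofNat_injOn_Ico 0).ne ⟨by omega, by omega⟩ ⟨by omega, by omega⟩ (by omega)
  have he' : s(Fin.ofNat n b, Fin.ofNat n a) ∈ S := Sym2.eq_swap ▸ he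
  let p := cycleArc hn (show a ≤ b by omega)
  let q := (cycleArc hn (show b ≤ a + n by omega)).copy rfl (Fin.ofNat_add_self a)
  have hq : q.IsPath := (isPath_copy _ _ _).mpr (isPath_cycleArc hn _ (by omega))
  refine ⟨insert s(Fin.ofNat n b, Fin.ofNat n a) p.edges.toFinset,
    insert_toFinset_edges_mem_cycleEdgeSets (isPath_cycleArc hn _ (by omega)) hne he' (hS' _ he'),
    insert s(Fin.ofNat n a, Fin.ofNat n b) q.edges.toFinset,
    insert_toFinset_edges_mem_cycleEdgeSets hq hne.symm he (hS' _ he), fun h => ?_,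
    by rw [insert_toFinset_edges_inter_eq hS' he', Sym2.eq_swap],
    insert_toFinset_edges_inter_eq hS' he _⟩
  have hmem : s(Fin.ofNat n a, Fin.ofNat n (a + 1)) ∈
      insert s(Fin.ofNat n b, Fin.ofNat n a) p.edges.toFinset :=
    mem_insert_of_mem (List.mem_toFinset.mpr (mem_edges_ofSeq _ _ _ le_rfl (by omega)))
  rw [h, mem_insert, List.mem_toFinset, edges_copy] at hmem
  rcases hmem with h | h
  · have := Fin.eq_or_eq_of_ofNat_mem (by omega) hb (by omega) (h ▸ Sym2.mem_mk_right _ _)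
    omega
  · exact ofNat_notMem_support_cycleArc hn _ (by omega) (by omega)
      ((cycleArc hn _).snd_mem_support_of_mem_edges h)

variable {a b c d : ℕ}

lemma exists_cycle_chords_eq_pair_of_nested (hac : a ≤ c) (hcd : c < d) (hdb : d ≤ b)
    (hb : b < n) (he : s(Fin.ofNat n a, Fin.ofNat n b) ∈ S)
    (hg : s(Fin.ofNat n c, Fin.ofNat n d) ∈ S)
    (hne : s(Fin.ofNat n a, Fin.ofNat n b) ≠ s(Fin.ofNat n c, Fin.ofNat n d)) :
    ∃ E ∈ cycleEdgeSets (cycleGraph n ⊔ fromEdgeSet ↑S),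
      E ∩ S = {s(Fin.ofNat n a, Fin.ofNat n b), s(Fin.ofNat n c, Fin.ofNat n d)} := by
  rw [Sym2.eq_swap] at he hne ⊢
  exact exists_mem_cycleEdgeSets_inter_eq_pair (fun e he => (hS e he).2)
    (isPath_cycleArc hn hac (by omega)) (isPath_cycleArc hn hdb (by omega))
    (disjoint_support_cycleArc hn hac hdb (Nat.zero_le a) hcd (by omega)) hg he hne.symm

lemma exists_cycle_chords_eq_pair_of_crossing (hac : a < c) (hcb : c < b) (hbd : b < d) (hd : d < n)
    (he : s(Fin.ofNat n a, Fin.ofNat n b) ∈ S) (hg : s(Fin.ofNat n c, Fin.ofNat n d) ∈ S) :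
    ∃ E ∈ cycleEdgeSets (cycleGraph n ⊔ fromEdgeSet ↑S),
      E ∩ S = {s(Fin.ofNat n a, Fin.ofNat n b), s(Fin.ofNat n c, Fin.ofNat n d)} := by
  rw [Sym2.eq_swap] at he ⊢
  refine exists_mem_cycleEdgeSets_inter_eq_pair (fun e he => (hS e he).2)
    (isPath_cycleArc hn hac.le (by omega)) (isPath_cycleArc hn hbd.le (by omega)).reverse ?_
    hg he ?_
  · rw [support_reverse, List.disjoint_reverse_right]
    exact disjoint_support_cycleArc hn hac.le hbd.le (Nat.zero_le a) hcb (by omega)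
  · intro h
    have := Fin.eq_or_eq_of_ofNat_mem (by omega) (by omega) (by omega) (h ▸ Sym2.mem_mk_left _ _)
    omega

lemma exists_cycle_chords_eq_pair_of_disjoint (hab : a < b) (hbc : b ≤ c) (hcd : c < d)
    (hd : d < n) (he : s(Fin.ofNat n a, Fin.ofNat n b) ∈ S)
    (hg : s(Fin.ofNat n c, Fin.ofNat n d) ∈ S) :
    ∃ E ∈ cycleEdgeSets (cycleGraph n ⊔ fromEdgeSet ↑S),
      E ∩ S = {s(Fin.ofNat n a, Fin.ofNat n b), s(Fin.ofNat n c, Fin.ofNat n d)} := by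
  have hne : s(Fin.ofNat n c, Fin.ofNat n d) ≠ s(Fin.ofNat n a, Fin.ofNat n b) := fun h => by
    have := Fin.eq_or_eq_of_ofNat_mem (by omega) (by omega) (by omega) (h ▸ Sym2.mem_mk_right _ _)
    omega
  rw [← Fin.ofNat_add_self a] at he hne ⊢
  exact exists_mem_cycleEdgeSets_inter_eq_pair (fun e he => (hS e he).2)
    (isPath_cycleArc hn hbc (by omega)) (isPath_cycleArc hn (show d ≤ a + n by omega) (by omega))
    (disjoint_support_cycleArc hn hbc _ le_rfl hcd (by omega)) hg he hne

lemma exists_cycle_chords_eq_pair {e g : Sym2 (Fin n)} (he : e ∈ S) (hg : g ∈ S)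
    (hne : e ≠ g) :
    ∃ E ∈ cycleEdgeSets (cycleGraph n ⊔ fromEdgeSet ↑S), E ∩ S = {e, g} := by
  obtain ⟨a, b, hab, -, hb, rfl⟩ := (hS _ he).exists_eq_ofNat
  obtain ⟨c, d, hcd, -, hd, rfl⟩ := (hS _ hg).exists_eq_ofNat
  wlog hac : a ≤ c generalizing a b c d
  · rw [pair_comm]
    exact this c d hcd hd hg a b hab hb he hne.symm (by omega)
  rcases le_or_gt d b with hdb | hbd
  · exact exists_cycle_chords_eq_pair_of_nested hn hS hac (by omega) hdb hb he hg hne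
  rcases le_or_gt b c with hbc | hcb
  · exact exists_cycle_chords_eq_pair_of_disjoint hn hS (by omega) hbc (by omega) hd he hg
  rcases hac.eq_or_lt with rfl | hac
  · rw [pair_comm]
    exact exists_cycle_chords_eq_pair_of_nested hn hS le_rfl (by omega) hbd.le hd hg he hne.symm
  · exact exists_cycle_chords_eq_pair_of_crossing hn hS hac hcb hbd hd he hg

end ChordCycles

lemma choose_two_card_le_card_filter {n : ℕ} [NeZero n] (hn : 3 ≤ n) {S : Finset (Sym2 (Fin n))}
    (hS : ∀ e ∈ S, IsChord n e) {T : Finset (Sym2 (Fin n))} (hT : T ⊆ S)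
    {C : Finset (Finset (Sym2 (Fin n)))}
    (hC : ∀ E, E ∈ C ↔ E ∈ cycleEdgeSets (cycleGraph n ⊔ fromEdgeSet ↑S)) :
    (2).choose #T ≤ #{E ∈ C | E ∩ S = T} := by
  have mem : ∀ E ∈ cycleEdgeSets (cycleGraph n ⊔ fromEdgeSet ↑S), E ∩ S = T →
      E ∈ {E ∈ C | E ∩ S = T} := fun E hE hET => mem_filter.mpr ⟨(hC E).mpr hE, hET⟩
  match h : #T with
  | 0 =>
    obtain rfl := card_eq_zero.mp h
    obtain ⟨E, hE, hET⟩ := exists_cycle_chords_eq_empty hn hS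
    exact card_pos.mpr ⟨E, mem E hE hET⟩
  | 1 =>
    obtain ⟨e, rfl⟩ := card_eq_one.mp h
    obtain ⟨E₁, hE₁, E₂, hE₂, hne, hE₁e, hE₂e⟩ :=
      exists_two_cycles_chords_eq_singleton (by omega) hS (hT (mem_singleton_self e))
    exact one_lt_card.mpr ⟨E₁, mem E₁ hE₁ hE₁e, E₂, mem E₂ hE₂ hE₂e, hne⟩
  | 2 =>
    obtain ⟨e, g, hne, rfl⟩ := card_eq_two.mp h
    obtain ⟨E, hE, hET⟩ := exists_cycle_chords_eq_pair (by omega) hS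
      (hT (mem_insert_self e {g})) (hT (mem_insert_of_mem (mem_singleton_self g))) hne
    exact card_pos.mpr ⟨E, mem E hE hET⟩
  | k + 3 => simp [Nat.choose_eq_zero_of_lt]

/-- If `p` chords are added to `Cₙ` (`n ≥ 3`), the resulting graph has at
least `(p+2).choose 2` cycles. -/
theorem stmt_0 (n p : ℕ) (hn : 3 ≤ n) (S : Finset (Sym2 (Fin n)))
    (hchords : ∀ e ∈ S, IsChord n e) (hp : S.card = p) :
    (p + 2).choose 2 ≤ (cycleEdgeSets (cycleGraph n ⊔ fromEdgeSet ↑S)).ncard := by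
  have : NeZero n := ⟨by omega⟩
  have hfin := (cycleEdgeSets (cycleGraph n ⊔ fromEdgeSet ↑S)).toFinite
  rw [Set.ncard_eq_toFinset_card _ hfin, card_eq_sum_card_fiberwise (f := (· ∩ S))
    (t := S.powerset) fun E _ => mem_powerset.mpr inter_subset_right, ← hp,
    ← sum_powerset_choose_two_card]
  exact sum_le_sum fun T hT =>
    choose_two_card_le_card_filter hn hchords (mem_powerset.mp hT) fun E => hfin.mem_toFinset
end

section
/- If p chords are added to the cycle C_n (n ≥ 3), then the total number of cycles in the resulting graph is at most 2^(p+1) - 1. -/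
open SimpleGraph

/-!
Work over `𝔽₂`. Every vertex meets an even number of edges of a cycle, so the edge indicators
of distinct cycles are distinct nonzero vectors of the cycle space, the kernel of the
vertex–edge incidence matrix. In a connected graph only the constant vectors are killed by
the transposed incidence matrix, so the incidence matrix has rank at least `|V| - 1` and the
cycle space has dimension at most `|E| - |V| + 1`. The cycle `Cₙ` with `p` added edges has
at most `n + p` edges, hence a cycle space of dimension at most `p + 1`, with at most
`2^(p+1) - 1` nonzero vectors.
-/

open Matrix Finset

namespace SimpleGraph

theorem Preconnected.eq_of_forall_adj {V α : Type*} {G : SimpleGraph V} (hG : G.Preconnected)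
    {f : V → α} (hf : ∀ u v, G.Adj u v → f u = f v) (u v : V) : f u = f v := by
  obtain ⟨w⟩ := hG u v
  induction w with
  | nil => rfl
  | cons h _ ih => exact (hf _ _ h).trans ih

variable {V : Type*} [DecidableEq V]

/-- `incMatrix (ZMod 2)` with its columns restricted to the edges of `G`. -/
def edgeIncMatrix (G : SimpleGraph V) : Matrix V G.edgeSet (ZMod 2) :=
  fun v e => if v ∈ (e : Sym2 V) then 1 else 0

def edgeIndicator (G : SimpleGraph V) (E : Finset (Sym2 V)) : G.edgeSet → ZMod 2 :=
  fun e => if (e : Sym2 V) ∈ E then 1 else 0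

theorem edgeIndicator_injOn (G : SimpleGraph V) :
    Set.InjOn G.edgeIndicator {E | ↑E ⊆ G.edgeSet} := by
  intro E hE E' hE' h
  have hiff : ∀ e : G.edgeSet, (e : Sym2 V) ∈ E ↔ (e : Sym2 V) ∈ E' := fun e => by
    have := congrFun h e
    simp only [edgeIndicator] at this
    split_ifs at this <;> simp_all
  ext e
  exact ⟨fun he => (hiff ⟨e, hE he⟩).1 he, fun he => (hiff ⟨e, hE' he⟩).2 he⟩

theorem edgeIndicator_ne_zero {G : SimpleGraph V} {E : Finset (Sym2 V)} (hE : ↑E ⊆ G.edgeSet)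
    (hne : E.Nonempty) : G.edgeIndicator E ≠ 0 := by
  obtain ⟨e, he⟩ := hne
  intro h
  simpa [edgeIndicator, he] using congrFun h ⟨e, hE he⟩

section CycleSpace

variable {G : SimpleGraph V}

theorem edgeIncMatrix_transpose_mulVec_mk [Fintype V] (y : V → ZMod 2) {u v : V} (h : G.Adj u v) :
    ((G.edgeIncMatrix)ᵀ *ᵥ y) ⟨s(u, v), h⟩ = y u + y v := by
  simp only [Matrix.mulVec, dotProduct, Matrix.transpose_apply, edgeIncMatrix, ite_mul, one_mul,
    zero_mul]
  rw [← Finset.sum_filter]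
  have : Finset.univ.filter (· ∈ s(u, v)) = {u, v} := by ext; simp [Sym2.mem_iff]
  rw [this, Finset.sum_pair h.ne]

theorem ker_edgeIncMatrix_transpose_le_span_one [Fintype V] (hG : G.Connected) :
    LinearMap.ker (G.edgeIncMatrix)ᵀ.mulVecLin ≤ Submodule.span (ZMod 2) {fun _ => 1} := by
  intro y hy
  have hadj : ∀ u v, G.Adj u v → y u = y v := fun u v h => by
    rw [← CharTwo.add_eq_zero, ← edgeIncMatrix_transpose_mulVec_mk y h]
    exact congrFun hy _
  obtain ⟨v₀⟩ := hG.nonempty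
  exact Submodule.mem_span_singleton.mpr
    ⟨y v₀, funext fun v => by simpa using hG.preconnected.eq_of_forall_adj hadj v₀ v⟩

variable [Fintype G.edgeSet]

variable (G) in
def cycleSpace : Submodule (ZMod 2) (G.edgeSet → ZMod 2) :=
  LinearMap.ker G.edgeIncMatrix.mulVecLin

theorem edgeIncMatrix_mulVec_edgeIndicator {E : Finset (Sym2 V)} (hE : ↑E ⊆ G.edgeSet) (v : V) :
    (G.edgeIncMatrix *ᵥ G.edgeIndicator E) v = #{e ∈ E | v ∈ e} := by
  have hsum := Finset.sum_subtype (F := ‹Fintype G.edgeSet›) G.edgeFinset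
    (fun _ => mem_edgeFinset) (fun e => if e ∈ E then if v ∈ e then (1 : ZMod 2) else 0 else 0)
  simp only [Matrix.mulVec, dotProduct, edgeIncMatrix, edgeIndicator, mul_ite, mul_one, mul_zero]
  rw [← hsum, Finset.sum_ite_mem,
    Finset.inter_eq_right.mpr fun e he => mem_edgeFinset.mpr (hE he), ← Finset.sum_filter,
    Finset.sum_const, nsmul_one]

theorem edgeIndicator_mem_cycleSpace {v : V} {w : G.Walk v v} (hw : w.IsTrail) :
    G.edgeIndicator w.edges.toFinset ∈ G.cycleSpace := by
  funext u
  rw [mulVecLin_apply, edgeIncMatrix_mulVec_edgeIndicator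
      (fun e he => w.edges_subset_edgeSet (List.mem_toFinset.mp he)),
    Pi.zero_apply, ZMod.natCast_eq_zero_iff_even]
  have hfilter : {e ∈ w.edges.toFinset | u ∈ e} = (w.edges.filter (u ∈ ·)).toFinset := by
    ext; simp
  rw [hfilter, List.toFinset_card_of_nodup (hw.edges_nodup.filter _),
    ← List.countP_eq_length_filter]
  simpa using hw.even_countP_edges_iff u

variable (G) in
theorem ncard_cycleEdgeSets_lt :
    (cycleEdgeSets G).ncard < 2 ^ Module.finrank (ZMod 2) G.cycleSpace := by
  have hsub : ∀ E ∈ cycleEdgeSets G, ↑E ⊆ G.edgeSet := by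
    rintro E ⟨v, w, -, rfl⟩ e he
    exact w.edges_subset_edgeSet (List.mem_toFinset.mp he)
  have hmaps : ∀ E ∈ cycleEdgeSets G, G.edgeIndicator E ∈ (G.cycleSpace : Set _) \ {0} := by
    rintro E ⟨v, w, hw, rfl⟩
    refine ⟨edgeIndicator_mem_cycleSpace hw.isTrail,
      edgeIndicator_ne_zero (hsub _ ⟨v, w, hw, rfl⟩) ?_⟩
    rw [List.toFinset_nonempty_iff, Ne, Walk.edges_eq_nil]
    exact hw.not_nil
  calc (cycleEdgeSets G).ncard ≤ ((G.cycleSpace : Set (G.edgeSet → ZMod 2)) \ {0}).ncard :=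
        Set.ncard_le_ncard_of_injOn _ hmaps ((edgeIndicator_injOn G).mono hsub) (Set.toFinite _)
    _ < (G.cycleSpace : Set (G.edgeSet → ZMod 2)).ncard :=
        Set.ncard_sdiff_singleton_lt_of_mem G.cycleSpace.zero_mem
    _ = 2 ^ Module.finrank (ZMod 2) G.cycleSpace := by
        rw [← Nat.card_coe_set_eq, SetLike.coe_sort_coe,
          Module.natCard_eq_pow_finrank (K := ZMod 2), Nat.card_zmod]

theorem finrank_cycleSpace_add_card_le [Fintype V] (hG : G.Connected) :
    Module.finrank (ZMod 2) G.cycleSpace + Fintype.card V ≤ Fintype.card G.edgeSet + 1 := by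
  have hA := LinearMap.finrank_range_add_finrank_ker G.edgeIncMatrix.mulVecLin
  have hAt := LinearMap.finrank_range_add_finrank_ker (G.edgeIncMatrix)ᵀ.mulVecLin
  have hker : Module.finrank (ZMod 2) (LinearMap.ker (G.edgeIncMatrix)ᵀ.mulVecLin) ≤ 1 :=
    (Submodule.finrank_mono (ker_edgeIncMatrix_transpose_le_span_one hG)).trans
      ((finrank_span_le_card _).trans (by simp))
  have hrank : (G.edgeIncMatrix)ᵀ.rank = G.edgeIncMatrix.rank := Matrix.rank_transpose _
  simp only [Module.finrank_fintype_fun_eq_card] at hA hAt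
  unfold Matrix.rank at hrank
  unfold cycleSpace
  omega

end CycleSpace

theorem card_edgeSet_sup_fromEdgeSet_le (G : SimpleGraph V) (S : Finset (Sym2 V))
    [Fintype G.edgeSet] [Fintype (G ⊔ fromEdgeSet ↑S).edgeSet] :
    Fintype.card (G ⊔ fromEdgeSet ↑S).edgeSet ≤ Fintype.card G.edgeSet + #S := by
  rw [← edgeFinset_card, ← edgeFinset_card]
  calc #(G ⊔ fromEdgeSet ↑S).edgeFinset ≤ #(G.edgeFinset ∪ S) :=
        card_le_card fun e he => by
          simp only [mem_edgeFinset, edgeSet_sup, edgeSet_fromEdgeSet] at he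
          simp only [mem_union, mem_edgeFinset]
          exact he.imp id (·.1)
    _ ≤ #G.edgeFinset + #S := card_union_le _ _

theorem card_edgeFinset_cycleGraph (n : ℕ) : #(cycleGraph (n + 3)).edgeFinset = n + 3 := by
  have h := sum_degrees_eq_twice_card_edges (cycleGraph (n + 3))
  simp only [cycleGraph_degree_three_le, sum_const, card_univ, Fintype.card_fin, smul_eq_mul] at h
  omega

end SimpleGraph

theorem stmt_1_general (n p : ℕ) (hn : 3 ≤ n) (S : Finset (Sym2 (Fin n)))
    (hp : S.card = p) :
    (cycleEdgeSets (cycleGraph n ⊔ fromEdgeSet ↑S)).ncard ≤ 2 ^ (p + 1) - 1 := by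
  classical
  obtain ⟨m, rfl⟩ : ∃ m, n = m + 3 := ⟨n - 3, by omega⟩
  set G := cycleGraph (m + 3) ⊔ fromEdgeSet ↑S
  have hconn : G.Connected := cycleGraph_connected.mono le_sup_left
  have hedges : Fintype.card G.edgeSet ≤ m + 3 + p :=
    calc Fintype.card G.edgeSet ≤ Fintype.card (cycleGraph (m + 3)).edgeSet + #S :=
          card_edgeSet_sup_fromEdgeSet_le _ _
      _ = m + 3 + p := by rw [← edgeFinset_card, card_edgeFinset_cycleGraph, hp]
  have hdim := finrank_cycleSpace_add_card_le hconn
  rw [Fintype.card_fin] at hdim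
  have hpow : 2 ^ Module.finrank (ZMod 2) G.cycleSpace ≤ 2 ^ (p + 1) :=
    Nat.pow_le_pow_right two_pos (by omega)
  have := ncard_cycleEdgeSets_lt G
  omega

/-- If `p` chords are added to `Cₙ` (`n ≥ 3`), the resulting graph has at
most `2^(p+1) - 1` cycles. -/
theorem stmt_1 (n p : ℕ) (hn : 3 ≤ n) (S : Finset (Sym2 (Fin n)))
    (hchords : ∀ e ∈ S, IsChord n e) (hp : S.card = p) :
    (cycleEdgeSets (cycleGraph n ⊔ fromEdgeSet ↑S)).ncard ≤ 2 ^ (p + 1) - 1 :=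
  stmt_1_general n p hn S hp
end

section
/- Let G be obtained from C_n by adding a set X of chords. If X contains two adjacent chords (chords sharing an endpoint), then G has at most one cycle that passes through every chord in X; if no two chords in X are adjacent, then G has at most two such cycles. -/
open SimpleGraph

/-- Two chords are adjacent if they are distinct and share an endpoint. -/
def AdjacentChords {n : ℕ} (e f : Sym2 (Fin n)) : Prop :=
  e ≠ f ∧ ∃ v : Fin n, v ∈ e ∧ v ∈ f


/-! Every vertex meets either none or exactly two edges of a cycle. A cycle of `Cₙ ∪ X` through
all of `X` consists of `X` and some edges of `Cₙ`; by parity at the vertex `k + 1`, whether it uses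
the edge `{k + 1, k + 2}` is determined by whether it uses `{k, k + 1}`. Going around `Cₙ`, such a
cycle is therefore determined by whether it uses one fixed edge of `Cₙ`, so there are at most two.
If two chords of `X` meet at `u`, they are the only edges at `u` of every such cycle, which fixes
whether `{u, u + 1}` is used and leaves at most one cycle. -/

open Finset

lemma Finset.mem_iff_mem_of_even_card_filter {α : Type*} [DecidableEq α] {p : α → Prop}
    [DecidablePred p] {E₁ E₂ : Finset α} {a : α} (ha : p a)
    (hagree : ∀ b, p b → b ≠ a → (b ∈ E₁ ↔ b ∈ E₂))
    (h₁ : Even #{b ∈ E₁ | p b}) (h₂ : Even #{b ∈ E₂ | p b}) : a ∈ E₁ ↔ a ∈ E₂ := by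
  have hsplit : ∀ E : Finset α,
      #{b ∈ E | p b} = #(({b ∈ E | p b}).erase a) + if a ∈ E then 1 else 0 := by
    intro E
    split_ifs with haE
    · exact (card_erase_add_one (mem_filter.mpr ⟨haE, ha⟩)).symm
    · rw [erase_eq_of_notMem fun h => haE (mem_filter.mp h).1, add_zero]
  have herase : ({b ∈ E₁ | p b}).erase a = ({b ∈ E₂ | p b}).erase a := by
    ext b
    simp only [mem_erase, mem_filter]
    exact ⟨fun ⟨hba, hb, hpb⟩ => ⟨hba, (hagree b hpb hba).mp hb, hpb⟩,
      fun ⟨hba, hb, hpb⟩ => ⟨hba, (hagree b hpb hba).mpr hb, hpb⟩⟩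
  rw [hsplit] at h₁ h₂
  rw [herase] at h₁
  split_ifs at h₁ h₂ <;> simp only [add_zero, Nat.even_add_one] at h₁ h₂ <;> tauto

open Fin.CommRing in
lemma Fin.forall_of_add_one {n : ℕ} [NeZero n] {P : Fin n → Prop} {v : Fin n} (hv : P v)
    (hstep : ∀ k, P k → P (k + 1)) (k : Fin n) : P k := by
  have hP : ∀ j : ℕ, P (v + (j : Fin n)) := by
    intro j
    induction j with
    | zero => simpa using hv
    | succ j ih => simpa [Nat.cast_succ, add_assoc] using hstep _ ih
  simpa using hP (k - v).val

namespace SimpleGraph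

section

variable {V : Type*} [DecidableEq V] {G : SimpleGraph V}

lemma Walk.card_filter_mem_edges_eq_ncard_neighborSet {a b : V} (w : G.Walk a b) (u : V) :
    #{e ∈ w.edges.toFinset | u ∈ e} = (w.toSubgraph.neighborSet u).ncard := by
  rw [← Set.ncard_coe_finset,
    ← Set.ncard_image_of_injective (w.toSubgraph.neighborSet u)
      fun _ _ h => Sym2.congr_right.mp h]
  refine congrArg Set.ncard (Set.ext fun e => ?_)
  simp only [coe_filter, List.mem_toFinset, Set.mem_ofPred_eq, Set.mem_image,
    Subgraph.mem_neighborSet, ← Subgraph.mem_edgeSet, Walk.mem_edges_toSubgraph]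
  constructor
  · rintro ⟨he, hu⟩
    obtain ⟨v, rfl⟩ := Sym2.mem_iff_exists.mp hu
    exact ⟨v, he, rfl⟩
  · rintro ⟨v, he, rfl⟩
    exact ⟨he, Sym2.mem_mk_left u v⟩

lemma Walk.IsCycle.card_filter_mem_edges {v : V} {w : G.Walk v v} (hw : w.IsCycle) (u : V) :
    #{e ∈ w.edges.toFinset | u ∈ e} = 0 ∨ #{e ∈ w.edges.toFinset | u ∈ e} = 2 := by
  rw [w.card_filter_mem_edges_eq_ncard_neighborSet]
  by_cases hu : u ∈ w.support
  · exact Or.inr (hw.ncard_neighborSet_toSubgraph_eq_two hu)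
  · left
    have : w.toSubgraph.neighborSet u = ∅ := Set.eq_empty_of_forall_notMem fun _ h =>
      hu (w.mem_verts_toSubgraph.mp (Subgraph.Adj.fst_mem h))
    rw [this, Set.ncard_empty]

lemma card_filter_mem_of_mem_cycleEdgeSets {E : Finset (Sym2 V)} (hE : E ∈ cycleEdgeSets G)
    (u : V) : #{e ∈ E | u ∈ e} = 0 ∨ #{e ∈ E | u ∈ e} = 2 := by
  obtain ⟨v, w, hw, rfl⟩ := hE
  exact hw.card_filter_mem_edges u

lemma mem_iff_of_mem_cycleEdgeSets_sup_fromEdgeSet {H : SimpleGraph V} {X E : Finset (Sym2 V)}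
    (hE : E ∈ cycleEdgeSets (H ⊔ fromEdgeSet X)) (hXE : X ⊆ E) {e : Sym2 V}
    (he : e ∉ H.edgeSet) : e ∈ E ↔ e ∈ X := by
  refine ⟨fun heE => ?_, fun heX => hXE heX⟩
  obtain ⟨v, w, -, rfl⟩ := hE
  have := w.edges_subset_edgeSet (List.mem_toFinset.mp heE)
  rw [edgeSet_sup, edgeSet_fromEdgeSet] at this
  exact (this.resolve_left he).1

end

section

variable {n : ℕ}

lemma eq_or_eq_of_mem_cycleGraph_edgeSet {u : Fin (n + 2)} {e : Sym2 (Fin (n + 2))}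
    (he : e ∈ (cycleGraph (n + 2)).edgeSet) (hu : u ∈ e) : e = s(u - 1, u) ∨ e = s(u, u + 1) := by
  obtain ⟨v, rfl⟩ := Sym2.mem_iff_exists.mp hu
  have hv : v ∈ (cycleGraph (n + 2)).neighborSet u := he
  rw [cycleGraph_neighborSet] at hv
  rcases hv with rfl | rfl
  · exact Or.inl Sym2.eq_swap
  · exact Or.inr rfl

lemma eq_of_agree_on_cycleGraph_edge {E₁ E₂ : Finset (Sym2 (Fin (n + 2)))}
    (hoff : ∀ e ∉ (cycleGraph (n + 2)).edgeSet, e ∈ E₁ ↔ e ∈ E₂)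
    (h₁ : ∀ u, Even #{e ∈ E₁ | u ∈ e}) (h₂ : ∀ u, Even #{e ∈ E₂ | u ∈ e})
    {v : Fin (n + 2)} (hv : s(v, v + 1) ∈ E₁ ↔ s(v, v + 1) ∈ E₂) : E₁ = E₂ := by
  have hcycle : ∀ k : Fin (n + 2), s(k, k + 1) ∈ E₁ ↔ s(k, k + 1) ∈ E₂ := by
    refine Fin.forall_of_add_one hv fun k hk => ?_
    refine mem_iff_mem_of_even_card_filter (p := (k + 1 ∈ ·)) (Sym2.mem_mk_left _ _)
      (fun e hu hne => ?_) (h₁ _) (h₂ _)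
    by_cases he : e ∈ (cycleGraph (n + 2)).edgeSet
    · rcases eq_or_eq_of_mem_cycleGraph_edgeSet he hu with rfl | rfl
      · rwa [add_sub_cancel_right]
      · exact absurd rfl hne
    · exact hoff e he
  ext e
  by_cases he : e ∈ (cycleGraph (n + 2)).edgeSet
  · obtain ⟨u, hu⟩ : ∃ u, u ∈ e := e.ind fun a _ => ⟨a, Sym2.mem_mk_left _ _⟩
    rcases eq_or_eq_of_mem_cycleGraph_edgeSet he hu with rfl | rfl
    · simpa using hcycle (u - 1)
    · exact hcycle u
  · exact hoff e he

end

end SimpleGraph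

theorem stmt_3_general (n : ℕ) (hn : 3 ≤ n) (X : Finset (Sym2 (Fin n))) :
    ((∃ e ∈ X, ∃ f ∈ X, AdjacentChords e f) →
      {E ∈ cycleEdgeSets (cycleGraph n ⊔ fromEdgeSet ↑X) | X ⊆ E}.ncard ≤ 1) ∧
    ((∀ e ∈ X, ∀ f ∈ X, ¬ AdjacentChords e f) →
      {E ∈ cycleEdgeSets (cycleGraph n ⊔ fromEdgeSet ↑X) | X ⊆ E}.ncard ≤ 2) := by
  obtain ⟨n, rfl⟩ : ∃ m, n = m + 2 := ⟨n - 2, by omega⟩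
  set S := {E ∈ cycleEdgeSets (cycleGraph (n + 2) ⊔ fromEdgeSet ↑X) | X ⊆ E}
  have hdeg : ∀ E ∈ S, ∀ u, #{e ∈ E | u ∈ e} = 0 ∨ #{e ∈ E | u ∈ e} = 2 :=
    fun E hE => card_filter_mem_of_mem_cycleEdgeSets hE.1
  have heq : ∀ E₁ ∈ S, ∀ E₂ ∈ S, ∀ v : Fin (n + 2),
      (s(v, v + 1) ∈ E₁ ↔ s(v, v + 1) ∈ E₂) → E₁ = E₂ := by
    intro E₁ h₁ E₂ h₂ v hv
    have heven : ∀ E ∈ S, ∀ u, Even #{e ∈ E | u ∈ e} := fun E hE u => by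
      rcases hdeg E hE u with h | h <;> simp [h]
    refine eq_of_agree_on_cycleGraph_edge (fun e he => ?_) (heven E₁ h₁) (heven E₂ h₂) hv
    rw [mem_iff_of_mem_cycleEdgeSets_sup_fromEdgeSet h₁.1 h₁.2 he,
      mem_iff_of_mem_cycleEdgeSets_sup_fromEdgeSet h₂.1 h₂.2 he]
  refine ⟨fun ⟨e, he, f, hf, hef, u, hue, huf⟩ => ?_, fun _ => ?_⟩
  · have hat : ∀ E ∈ S, {g ∈ E | u ∈ g} = {e, f} := fun E hE =>
      (eq_of_subset_of_card_le (by simp [insert_subset_iff, hE.2 he, hE.2 hf, hue, huf])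
        (by rw [card_pair hef]; rcases hdeg E hE u with h | h <;> omega)).symm
    have hright : ∀ E ∈ S, s(u, u + 1) ∈ E ↔ s(u, u + 1) ∈ ({e, f} : Finset _) := fun E hE => by
      rw [← hat E hE, mem_filter, and_iff_left (Sym2.mem_mk_left _ _)]
    exact (Set.ncard_le_one (Set.toFinite S)).mpr fun E₁ h₁ E₂ h₂ =>
      heq E₁ h₁ E₂ h₂ u (by rw [hright E₁ h₁, hright E₂ h₂])
  · calc S.ncard ≤ (Set.univ : Set Prop).ncard :=
          Set.ncard_le_ncard_of_injOn (fun E => s(0, 1) ∈ E) (fun _ _ => Set.mem_univ _)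
            fun E₁ h₁ E₂ h₂ h => heq E₁ h₁ E₂ h₂ 0 (by rw [zero_add]; exact Iff.of_eq h)
      _ = 2 := by rw [Set.ncard_univ, Nat.card_eq_fintype_card, Fintype.card_prop]

/-- If a set `X` of chords is added to `Cₙ`, then the number of cycles of the
resulting graph passing through every chord of `X` is at most `1` if `X`
contains two adjacent chords, and at most `2` if no two chords of `X` are
adjacent. -/
theorem stmt_3 (n : ℕ) (hn : 3 ≤ n) (X : Finset (Sym2 (Fin n)))
    (hchords : ∀ e ∈ X, IsChord n e) :
    ((∃ e ∈ X, ∃ f ∈ X, AdjacentChords e f) →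
      {E ∈ cycleEdgeSets (cycleGraph n ⊔ fromEdgeSet ↑X) | X ⊆ E}.ncard ≤ 1) ∧
    ((∀ e ∈ X, ∀ f ∈ X, ¬ AdjacentChords e f) →
      {E ∈ cycleEdgeSets (cycleGraph n ⊔ fromEdgeSet ↑X) | X ⊆ E}.ncard ≤ 2) :=
  stmt_3_general n hn X
end

section
/- For p ≥ k ≥ 3, the identity 1 + Σ_{r=1}^{p-k} [ 2Σ_{i=0}^{1} C(k,i)·C(r-1, k-i-1) + Σ_{i=2}^{k-1} C(k,i)·C(r-1, k-i-1) ] = C(p,k) + k·C(p-k, k-1) + C(p-k, k) holds, where C denotes binomial coefficients. -/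
lemma vander (k n : ℕ) (hk : 1 ≤ k) :
    ∑ i ∈ Finset.range k, k.choose i * n.choose (k - 1 - i) = (k + n).choose (k - 1) := by
  rw [Nat.add_choose_eq, Finset.Nat.sum_antidiagonal_eq_sum_range_succ
    (fun a b => k.choose a * n.choose b), Nat.succ_eq_add_one, Nat.sub_add_cancel hk]

lemma key (k : ℕ) (hk : 3 ≤ k) : ∀ n, 1 + ∑ r ∈ Finset.Icc 1 n,
        (2 * ∑ i ∈ Finset.range 2, k.choose i * (r - 1).choose (k - i - 1) +
          ∑ i ∈ Finset.Icc 2 (k - 1), k.choose i * (r - 1).choose (k - i - 1)) =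
      (k + n).choose k + k * n.choose (k - 1) + n.choose k := by
  intro n
  induction n with
  | zero =>
    simp [Nat.choose_eq_zero_of_lt (show 0 < k - 1 by omega),
      Nat.choose_eq_zero_of_lt (show 0 < k by omega)]
  | succ n ih =>
    obtain ⟨m, rfl⟩ : ∃ m, k = m + 3 := ⟨k - 3, by omega⟩
    rw [Finset.sum_Icc_succ_top (by omega : 1 ≤ n + 1), ← add_assoc, ih]
    simp only [Nat.add_sub_cancel] at *
    have hsub : ∀ i, m + 3 - i - 1 = m + 2 - i := by intro i; omega
    simp only [hsub, show m + 3 - 1 = m + 2 from rfl, show m + 3 + (n + 1) = m + 3 + n + 1 from by omega] at *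
    have hsplit : ∑ i ∈ Finset.range (m + 3), (m+3).choose i * n.choose (m + 2 - i)
        = (∑ i ∈ Finset.range 2, (m+3).choose i * n.choose (m + 2 - i)) +
          ∑ i ∈ Finset.Icc 2 (m + 2), (m+3).choose i * n.choose (m + 2 - i) := by
      have hr : Finset.range (m + 3) = Finset.range 2 ∪ Finset.Icc 2 (m + 2) := by
        ext x; simp [Finset.mem_range, Finset.mem_Icc]; omega
      rw [hr, Finset.sum_union (by
        rw [Finset.disjoint_left]; intro a ha hb
        simp only [Finset.mem_range] at ha; simp only [Finset.mem_Icc] at hb; omega)]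
    have hv := vander (m + 3) n (by omega)
    simp only [show m + 3 - 1 = m + 2 from rfl] at hv
    have h2 : ∑ i ∈ Finset.range 2, (m+3).choose i * n.choose (m + 2 - i)
        = n.choose (m + 2) + (m + 3) * n.choose (m + 1) := by
      simp [Finset.sum_range_succ]
    have hp1 : (m + 3 + n + 1).choose (m + 3) =
        (m + 3 + n).choose (m + 2) + (m + 3 + n).choose (m + 3) :=
      Nat.choose_succ_succ' (m + 3 + n) (m + 2)
    have hp2 : (n + 1).choose (m + 2) = n.choose (m + 1) + n.choose (m + 2) :=
      Nat.choose_succ_succ' n (m + 1)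
    have hp3 : (n + 1).choose (m + 3) = n.choose (m + 2) + n.choose (m + 3) :=
      Nat.choose_succ_succ' n (m + 2)
    have hp2' : (m + 3) * (n + 1).choose (m + 2)
        = (m + 3) * n.choose (m + 1) + (m + 3) * n.choose (m + 2) := by
      rw [hp2]; ring
    omega

/-- The binomial identity
`1 + Σ_{r=1}^{p-k} (2 Σ_{i=0}^{1} C(k,i) C(r-1,k-i-1) + Σ_{i=2}^{k-1} C(k,i) C(r-1,k-i-1))
  = C(p,k) + k C(p-k,k-1) + C(p-k,k)` for `p ≥ k ≥ 3`. -/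
theorem stmt_10 (p k : ℕ) (hk : 3 ≤ k) (hp : k ≤ p) :
    1 + ∑ r ∈ Finset.Icc 1 (p - k),
        (2 * ∑ i ∈ Finset.range 2, k.choose i * (r - 1).choose (k - i - 1) +
          ∑ i ∈ Finset.Icc 2 (k - 1), k.choose i * (r - 1).choose (k - i - 1)) =
      p.choose k + k * (p - k).choose (k - 1) + (p - k).choose k := by
  obtain ⟨n, rfl⟩ : ∃ n, p = k + n := ⟨p - k, by omega⟩
  rw [Nat.add_sub_cancel_left]
  exact key k hk n
end
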